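/- arXiv:math/9803099 — 3 statements merged into one kernel-verified Lean document; each statement's English description precedes it below -/
import Mathlib

section
/- For every integer k ≥ 1 one has [2k−1]!!/[2k]!! ≤ ([1]/[2k+1])^{1/2} = [2k+1]^{−1/2}. -/
open Polynomial Filter

/-- The symmetric q-number `[n] = (q^n - q^{-n})/(q - q⁻¹)`. -/
noncomputable def qnum (q : ℝ) (n : ℕ) : ℝ := (q ^ (n : ℤ) - q ^ (-(n : ℤ))) / (q - q⁻¹)

/-- The q-factorial `[n]! = [1][2]⋯[n]`. -/
noncomputable def qfact (q : ℝ) : ℕ → ℝ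
  | 0 => 1
  | n + 1 => qfact q n * qnum q (n + 1)

/-- The even q-double factorial: `evenDF q n = [2n]!! = [2n][2n-2]⋯[2]`. -/
noncomputable def evenDF (q : ℝ) : ℕ → ℝ
  | 0 => 1
  | n + 1 => qnum q (2 * (n + 1)) * evenDF q n

/-- The odd q-double factorial: `oddDF q n = [2n-1]!! = [2n-1][2n-3]⋯[1]`. -/
noncomputable def oddDF (q : ℝ) : ℕ → ℝ
  | 0 => 1
  | n + 1 => qnum q (2 * n + 1) * oddDF q n

/-- `alphaC q m n = α_{2m-1;n}`, with `α_{-1;n} = 1` and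
`α_{2m-1;n} = Σ_{k=2m-1}^{n} [k]·α_{2m-3;k-2}`. -/
noncomputable def alphaC (q : ℝ) : ℕ → ℕ → ℝ
  | 0, _ => 1
  | m + 1, n => ∑ k ∈ Finset.Icc (2 * m + 1) n, qnum q k * alphaC q m (k - 2)

/-- `betaC q m n = β_{2m;n}`, with `β_{0;n} = 1` and
`β_{2m;n} = Σ_{k=2m}^{n} [k]·β_{2m-2;k-2}`. -/
noncomputable def betaC (q : ℝ) : ℕ → ℕ → ℝ
  | 0, _ => 1
  | m + 1, n => ∑ k ∈ Finset.Icc (2 * m + 2) n, qnum q k * betaC q m (k - 2)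

lemma qden_ne {q : ℝ} (hq : 0 < q) (hq1 : q ≠ 1) : q - q⁻¹ ≠ 0 := by
  intro h
  apply hq1
  have hq0 : q ≠ 0 := ne_of_gt hq
  have : q * q = 1 := by
    field_simp at h
    nlinarith
  nlinarith

lemma qnum_pos {q : ℝ} (hq : 0 < q) (hq1 : q ≠ 1) {n : ℕ} (hn : 1 ≤ n) :
    0 < qnum q n := by
  have hnz : (0:ℤ) < (n:ℤ) := by exact_mod_cast hn
  unfold qnum
  rcases lt_or_gt_of_ne hq1 with h | h
  · apply div_pos_of_neg_of_neg
    · have h1 : q ^ (n:ℤ) < 1 := zpow_lt_one₀ hq h hnz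
      have h2 : (1:ℝ) < q ^ (-(n:ℤ)) := by
        rw [zpow_neg]
        exact (one_lt_inv₀ (zpow_pos hq _)).mpr h1
      linarith
    · have : (1:ℝ) < q⁻¹ := (one_lt_inv₀ hq).mpr h
      linarith
  · apply div_pos
    · have h1 : (1:ℝ) < q ^ (n:ℤ) := one_lt_zpow₀ h hnz
      have h2 : q ^ (-(n:ℤ)) < 1 := by
        rw [zpow_neg]
        exact inv_lt_one_of_one_lt₀ h1
      linarith
    · have : q⁻¹ < 1 := inv_lt_one_of_one_lt₀ h
      linarith

lemma qnum_one {q : ℝ} (hq : 0 < q) (hq1 : q ≠ 1) : qnum q 1 = 1 := by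
  have hd := qden_ne hq hq1
  simp only [qnum, Nat.cast_one, zpow_one, zpow_neg]
  exact div_self hd

lemma qnum_key {q : ℝ} (hq : 0 < q) (hd : q - q⁻¹ ≠ 0) (n : ℕ) :
    qnum q n * qnum q (n + 2) = qnum q (n + 1) ^ 2 - 1 := by
  have hq0 : q ≠ 0 := ne_of_gt hq
  unfold qnum
  push_cast
  have e2 : q ^ ((n:ℤ) + 2) = q ^ (n:ℤ) * q ^ 2 := by
    rw [zpow_add₀ hq0]; norm_num [zpow_ofNat]
  have e2' : q ^ (-((n:ℤ) + 2)) = (q ^ (n:ℤ))⁻¹ * (q ^ 2)⁻¹ := by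
    rw [neg_add, zpow_add₀ hq0, zpow_neg, zpow_neg]; norm_num [zpow_ofNat]
  have e1 : q ^ ((n:ℤ) + 1) = q ^ (n:ℤ) * q := by
    rw [zpow_add₀ hq0, zpow_one]
  have e1' : q ^ (-((n:ℤ) + 1)) = (q ^ (n:ℤ))⁻¹ * q⁻¹ := by
    rw [neg_add, zpow_add₀ hq0, zpow_neg, zpow_neg, zpow_one]
  rw [e2, e2', e1, e1', zpow_neg]
  have hx : q ^ (n:ℤ) ≠ 0 := zpow_ne_zero _ hq0
  set x := q ^ (n:ℤ)
  have hd2 : (q - q⁻¹) ^ 2 ≠ 0 := pow_ne_zero _ hd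
  have key : (x - x⁻¹) * (x * q ^ 2 - x⁻¹ * (q ^ 2)⁻¹) =
      (x * q - x⁻¹ * q⁻¹) ^ 2 - (q - q⁻¹) ^ 2 := by
    field_simp
    ring
  rw [div_mul_div_comm, ← pow_two, div_pow, key, sub_div, div_self hd2]

lemma oddDF_pos {q : ℝ} (hq : 0 < q) (hq1 : q ≠ 1) (k : ℕ) : 0 < oddDF q k := by
  induction k with
  | zero => norm_num [oddDF]
  | succ n ih =>
    rw [oddDF]
    exact mul_pos (qnum_pos hq hq1 (by omega)) ih

lemma evenDF_pos {q : ℝ} (hq : 0 < q) (hq1 : q ≠ 1) (k : ℕ) : 0 < evenDF q k := by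
  induction k with
  | zero => norm_num [evenDF]
  | succ n ih =>
    rw [evenDF]
    exact mul_pos (qnum_pos hq hq1 (by omega)) ih

lemma main_sq {q : ℝ} (hq : 0 < q) (hq1 : q ≠ 1) (k : ℕ) (hk : 1 ≤ k) :
    (oddDF q k / evenDF q k) ^ 2 ≤ 1 / qnum q (2 * k + 1) := by
  have hd := qden_ne hq hq1
  induction k, hk using Nat.le_induction with
  | base =>
    have h2 : 0 < qnum q 2 := qnum_pos hq hq1 (by omega)
    have h3 : 0 < qnum q 3 := qnum_pos hq hq1 (by omega)
    have key := qnum_key hq hd 1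
    rw [qnum_one hq hq1] at key
    simp only [oddDF, evenDF, qnum_one hq hq1]
    norm_num
    rw [inv_le_inv₀ (by positivity) h3]
    nlinarith
  | succ n hn ih =>
    have ha : 0 < qnum q (2 * n + 1) := qnum_pos hq hq1 (by omega)
    have hb : 0 < qnum q (2 * n + 2) := qnum_pos hq hq1 (by omega)
    have hc : 0 < qnum q (2 * n + 3) := qnum_pos hq hq1 (by omega)
    have ho := oddDF_pos hq hq1 n
    have he := evenDF_pos hq hq1 n
    have key := qnum_key hq hd (2 * n + 1)
    have e1 : oddDF q (n + 1) = qnum q (2 * n + 1) * oddDF q n := rfl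
    have e2 : evenDF q (n + 1) = qnum q (2 * n + 2) * evenDF q n := by
      rw [evenDF]; ring_nf
    have e3 : 2 * (n + 1) + 1 = 2 * n + 3 := by ring
    rw [e1, e2, e3]
    set a := qnum q (2 * n + 1)
    set b := qnum q (2 * n + 2)
    set c := qnum q (2 * n + 3)
    have habc : a * c = b ^ 2 - 1 := by
      convert key using 3 <;> ring
    have step : (a * oddDF q n / (b * evenDF q n)) ^ 2
        = a ^ 2 / b ^ 2 * (oddDF q n / evenDF q n) ^ 2 := by
      rw [mul_div_mul_comm, mul_pow, div_pow]
    rw [step]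
    calc a ^ 2 / b ^ 2 * (oddDF q n / evenDF q n) ^ 2
        ≤ a ^ 2 / b ^ 2 * (1 / a) := by
          apply mul_le_mul_of_nonneg_left ih (by positivity)
      _ = a / b ^ 2 := by field_simp
      _ ≤ 1 / c := by
          rw [div_le_div_iff₀ (by positivity) hc]
          nlinarith

/-- For every `k ≥ 1`, `[2k-1]!!/[2k]!! ≤ ([1]/[2k+1])^{1/2} = [2k+1]^{-1/2}`. -/
theorem stmt2 (q : ℝ) (hq : 0 < q) (hq1 : q ≠ 1) (k : ℕ) (hk : 1 ≤ k) :
    oddDF q k / evenDF q k ≤ Real.sqrt (qnum q 1 / qnum q (2 * k + 1)) ∧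
    Real.sqrt (qnum q 1 / qnum q (2 * k + 1)) = (Real.sqrt (qnum q (2 * k + 1)))⁻¹ := by
  have h1 := qnum_one hq hq1
  constructor
  · have hr : 0 ≤ oddDF q k / evenDF q k :=
      le_of_lt (div_pos (oddDF_pos hq hq1 k) (evenDF_pos hq hq1 k))
    have := main_sq hq hq1 k hk
    rw [h1]
    calc oddDF q k / evenDF q k = Real.sqrt ((oddDF q k / evenDF q k) ^ 2) :=
          (Real.sqrt_sq hr).symm
      _ ≤ Real.sqrt (1 / qnum q (2 * k + 1)) := Real.sqrt_le_sqrt this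
  · rw [h1, one_div, Real.sqrt_inv]
end

section
/- For every integer n ≥ 0 the polynomial identity P_n(x;q) = (1/√([n]!))·Σ_{m=0}^{⌊n/2⌋} (−1)^m · α_{2m−1;n−1} · x^{n−2m} holds. -/
open Polynomial Filter

lemma alpha_zero {q : ℝ} {m n : ℕ} (h : n < 2 * m + 1) : alphaC q (m+1) n = 0 := by
  rw [alphaC, Finset.Icc_eq_empty (by omega), Finset.sum_empty]

lemma alpha_succ {q : ℝ} {m n : ℕ} (h : 2 * m + 1 ≤ n + 1) :
    alphaC q (m+1) (n+1) = alphaC q (m+1) n + qnum q (n+1) * alphaC q m (n-1) := by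
  rw [alphaC, alphaC, Finset.sum_Icc_succ_top h]
  have : n + 1 - 2 = n - 1 := by omega
  rw [this]

noncomputable def Qpoly (q : ℝ) (n : ℕ) : Polynomial ℝ :=
  ∑ m ∈ Finset.range (n / 2 + 1), C ((-1 : ℝ) ^ m * alphaC q m (n - 1)) * X ^ (n - 2 * m)

lemma Qpoly_ext (q : ℝ) (n N : ℕ) (hN : n / 2 + 1 ≤ N) :
    Qpoly q n = ∑ m ∈ Finset.range N, C ((-1 : ℝ) ^ m * alphaC q m (n - 1)) * X ^ (n - 2 * m) := by
  rw [Qpoly]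
  refine Finset.sum_subset (Finset.range_subset_range.2 hN) ?_
  intro m hm hm'
  simp only [Finset.mem_range, not_lt] at hm hm'
  obtain ⟨j, rfl⟩ : ∃ j, m = j + 1 := ⟨m - 1, by omega⟩
  rw [alpha_zero (by omega)]
  simp

lemma key (q : ℝ) (k : ℕ) :
    X * Qpoly q (k+1) = Qpoly q (k+2) + qnum q (k+1) • Qpoly q k := by
  set R := k / 2 + 2 with hR
  have h2 : qnum q (k+1) • Qpoly q k
      = ∑ m ∈ Finset.range R, (if m = 0 then (0 : Polynomial ℝ) else
          qnum q (k+1) • (C ((-1:ℝ)^(m-1) * alphaC q (m-1) (k-1)) * X ^ (k - 2*(m-1)))) := by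
    rw [hR, Finset.sum_range_succ', Qpoly, Finset.smul_sum]
    norm_num
  rw [Qpoly_ext q (k+1) R (by omega), Qpoly_ext q (k+2) R (by omega), Finset.mul_sum, h2,
    ← Finset.sum_add_distrib]
  refine Finset.sum_congr rfl ?_
  rintro (_ | j) hm
  · simp [alphaC, pow_succ, mul_comm]
  · simp only [Finset.mem_range] at hm
    rw [if_neg (Nat.succ_ne_zero j)]
    simp only [Nat.add_sub_cancel]
    have hj : 2 * j ≤ k := by omega
    have hs : k + 2 - 1 = k + 1 := by omega
    rw [hs, alpha_succ (by omega)]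
    rcases Nat.lt_or_ge (2*j + 1) (k+1) with h | h
    · have e1 : k + 2 - 2 * (j+1) = k - 2*j := by omega
      have e2 : k + 1 - 2 * (j+1) = k - 2*j - 1 := by omega
      have e3 : k - 2*j - 1 + 1 = k - 2*j := by omega
      rw [e1, e2, smul_eq_C_mul]
      rw [show (X : Polynomial ℝ) * (C ((-1:ℝ) ^ (j+1) * alphaC q (j+1) k) * X ^ (k - 2*j - 1))
          = C ((-1:ℝ) ^ (j+1) * alphaC q (j+1) k) * (X ^ (k - 2*j - 1) * X) from by ring,
        ← pow_succ, e3]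
      simp only [map_mul, map_add, map_pow, map_neg, map_one, pow_succ]
      ring
    · have hk : 2*j = k := by omega
      have z : alphaC q (j+1) k = 0 := alpha_zero (by omega)
      have e1 : k + 2 - 2 * (j+1) = 0 := by omega
      have e2 : k + 1 - 2 * (j+1) = 0 := by omega
      have e4 : k - 2*j = 0 := by omega
      rw [e1, e2, e4, z, smul_eq_C_mul]
      simp only [map_mul, map_add, map_pow, map_neg, map_one, mul_zero, map_zero]
      ring

lemma qfact_pos {q : ℝ} (hq : 0 < q) (hq1 : q ≠ 1) (n : ℕ) : 0 < qfact q n := by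
  induction n with
  | zero => norm_num [qfact]
  | succ n ih => exact mul_pos ih (qnum_pos hq hq1 (by omega))


/-- For every `n ≥ 0`,
`P_n(x;q) = (1/√([n]!))·Σ_{m=0}^{⌊n/2⌋} (−1)^m·α_{2m-1;n-1}·x^{n-2m}`. -/
theorem stmt7 (q : ℝ) (hq : 0 < q) (hq1 : q ≠ 1)
    (P : ℕ → Polynomial ℝ)
    (hP0 : P 0 = 1) (hP1 : P 1 = X)
    (hPrec : ∀ n : ℕ, 1 ≤ n →
      Real.sqrt (qnum q n) • P (n - 1) + Real.sqrt (qnum q (n + 1)) • P (n + 1) = X * P n)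
    (n : ℕ) :
    P n = (Real.sqrt (qfact q n))⁻¹ •
      ∑ m ∈ Finset.range (n / 2 + 1),
        C ((-1 : ℝ) ^ m * alphaC q m (n - 1)) * X ^ (n - 2 * m) := by
  set c : ℕ → ℝ := fun n => (Real.sqrt (qfact q n))⁻¹ with hc
  suffices H : ∀ n, P n = c n • Qpoly q n ∧ P (n+1) = c (n+1) • Qpoly q (n+1) by
    exact (H n).1
  have hf : ∀ n, (0:ℝ) < Real.sqrt (qfact q n) :=
    fun n => Real.sqrt_pos.2 (qfact_pos hq hq1 n)
  have hfs : ∀ n, Real.sqrt (qfact q (n+1))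
      = Real.sqrt (qfact q n) * Real.sqrt (qnum q (n+1)) := by
    intro n
    rw [show qfact q (n+1) = qfact q n * qnum q (n+1) from rfl,
      Real.sqrt_mul (qfact_pos hq hq1 n).le]
  have ha : ∀ n : ℕ, (0:ℝ) < Real.sqrt (qnum q (n+1)) :=
    fun n => Real.sqrt_pos.2 (qnum_pos hq hq1 (by omega))
  have hsq : ∀ n : ℕ, Real.sqrt (qnum q (n+1)) * Real.sqrt (qnum q (n+1)) = qnum q (n+1) :=
    fun n => Real.mul_self_sqrt (qnum_pos hq hq1 (by omega)).le
  intro n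
  induction n with
  | zero =>
    constructor
    · simp [hc, hP0, Qpoly, alphaC, qfact]
    · have : qfact q 1 = 1 := by simp [qfact, qnum_one hq hq1]
      simp [hc, hP1, Qpoly, alphaC, this]
  | succ n ih =>
    refine ⟨ih.2, ?_⟩
    have hrec := hPrec (n+1) (by omega)
    simp only [Nat.add_sub_cancel] at hrec
    set a := Real.sqrt (qnum q (n+1)) with hA
    set b := Real.sqrt (qnum q (n+2)) with hB
    have hscal : c (n+1) * qnum q (n+1) = a * c n := by
      rw [hc]
      simp only
      rw [hfs n, ← hA, mul_inv,
        show qnum q (n+1) = a * a from by rw [hA]; exact (hsq n).symm]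
      have h0 : a ≠ 0 := (ha n).ne'
      field_simp
    have hb : b • P (n+2) = c (n+1) • Qpoly q (n+2) := by
      have h1 : b • P (n+2) = X * P (n+1) - a • P n := by
        rw [← hrec]; abel
      rw [h1, ih.1, ih.2, mul_smul_comm, key q n, smul_add, smul_smul, smul_smul, hscal,
        ← smul_smul]
      abel
    have hbne : b ≠ 0 := (ha (n+1)).ne'
    have : P (n+2) = b⁻¹ • (b • P (n+2)) := by
      rw [smul_smul, inv_mul_cancel₀ hbne, one_smul]
    rw [this, hb, smul_smul]
    congr 1
    rw [hc]
    simp only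
    rw [hfs (n+1), ← hB, mul_inv, mul_comm]
end

section
/- The identity A_α^{(1)}·A_β^{(1)} − S_α^{(2)}·S_β^{(2)} = 1 holds. -/
open Polynomial Filter

/-- `A_α^{(1)} = 1 + Σ_{k=1}^∞ (1/[2k-1]!!)·Σ_{m=0}^{k-1} α_{2m-1;2k-2}`. -/
noncomputable def Aalpha1 (q : ℝ) : ℝ :=
  1 + ∑' k : ℕ, (oddDF q (k + 1))⁻¹ * ∑ m ∈ Finset.range (k + 1), alphaC q m (2 * k)

/-- `S_α^{(2)} = Ψ(q) + Σ_{k=1}^∞ (1/[2k]!!)·Σ_{m=0}^{k-1} α_{2m-1;2k-1}`,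
where `Ψ(q) = 1 + Σ_{k=1}^∞ [2k-1]!!/[2k]!!`. -/
noncomputable def Salpha2 (q : ℝ) : ℝ :=
  (1 + ∑' k : ℕ, oddDF q (k + 1) / evenDF q (k + 1))
    + ∑' k : ℕ, (evenDF q (k + 1))⁻¹ * ∑ m ∈ Finset.range (k + 1), alphaC q m (2 * k + 1)

/-- `A_β^{(1)} = 1 + Σ_{k=1}^∞ (1/[2k]!!)·Σ_{m=0}^{k-1} β_{2m;2k-1}`. -/
noncomputable def Abeta1 (q : ℝ) : ℝ :=
  1 + ∑' k : ℕ, (evenDF q (k + 1))⁻¹ * ∑ m ∈ Finset.range (k + 1), betaC q m (2 * k + 1)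

/-- `S_β^{(2)} = Φ(q) + Σ_{k=2}^∞ (1/[2k-1]!!)·Σ_{m=0}^{k-2} β_{2m;2k-2}`,
where `Φ(q) = 1 + Σ_{k=1}^∞ [2k]!!/[2k+1]!!`. -/
noncomputable def Sbeta2 (q : ℝ) : ℝ :=
  (1 + ∑' k : ℕ, evenDF q (k + 1) / oddDF q (k + 2))
    + ∑' k : ℕ, (oddDF q (k + 2))⁻¹ * ∑ m ∈ Finset.range (k + 1), betaC q m (2 * k + 2)

namespace Scratch

variable {q : ℝ}

lemma qzero_lt (hq : 1 < q) : 0 < q := lt_trans one_pos hq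

lemma qden_pos (hq : 1 < q) : 0 < q - q⁻¹ := by
  have h1 : q⁻¹ < 1 := inv_lt_one_of_one_lt₀ hq
  linarith

lemma qnum_pos (hq : 1 < q) (n : ℕ) : 0 < qnum q (n + 1) := by
  apply div_pos _ (qden_pos hq)
  have : q ^ (-((n:ℕ)+1:ℤ)) < q ^ (((n:ℕ)+1:ℤ)) := zpow_lt_zpow_right₀ hq (by omega)
  have e : (((n+1:ℕ)):ℤ) = ((n:ℕ):ℤ) + 1 := by push_cast; ring
  rw [e]
  linarith

lemma qnum_zero : qnum q 0 = 0 := by simp [qnum]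

lemma qnum_nonneg (hq : 1 < q) (n : ℕ) : 0 ≤ qnum q n := by
  cases n with
  | zero => simp [qnum_zero]
  | succ m => exact le_of_lt (qnum_pos hq m)

lemma qnum_one (hq : 1 < q) : qnum q 1 = 1 := by
  have := qden_pos hq
  simp only [qnum]
  norm_num
  exact ne_of_gt this

lemma q_mul_qnum_le (hq : 1 < q) (n : ℕ) : q * qnum q n ≤ qnum q (n + 1) := by
  have hd := qden_pos hq
  have hq0 := qzero_lt hq
  rw [qnum, qnum, ← mul_div_assoc, div_le_div_iff_of_pos_right hd]
  have e1 : q * (q ^ ((n:ℕ):ℤ) - q ^ (-((n:ℕ):ℤ))) = q ^ (((n:ℕ):ℤ)+1) - q ^ (1-((n:ℕ):ℤ)) := by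
    rw [mul_sub, ← zpow_one_add₀ (ne_of_gt hq0), ← zpow_one_add₀ (ne_of_gt hq0)]
    ring_nf
  have e2 : (((n+1:ℕ)):ℤ) = ((n:ℕ):ℤ) + 1 := by push_cast; ring
  rw [e1, e2]
  have h3 : q ^ (-(((n:ℕ):ℤ)+1)) ≤ q ^ (1-((n:ℕ):ℤ)) := by
    apply zpow_le_zpow_right₀ (le_of_lt hq); omega
  linarith

lemma pow_le_qnum (hq : 1 < q) (n : ℕ) : q ^ n ≤ qnum q (n + 1) := by
  induction n with
  | zero => simp [qnum_one hq]
  | succ m ih =>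
      calc q ^ (m+1) = q * q ^ m := by ring
      _ ≤ q * qnum q (m+1) := by nlinarith [qzero_lt hq]
      _ ≤ qnum q (m+2) := q_mul_qnum_le hq (m+1)

lemma oddDF_pos (hq : 1 < q) (n : ℕ) : 0 < oddDF q n := by
  induction n with
  | zero => norm_num [oddDF]
  | succ m ih => exact mul_pos (qnum_pos hq _) ih

lemma evenDF_pos (hq : 1 < q) (n : ℕ) : 0 < evenDF q n := by
  induction n with
  | zero => norm_num [evenDF]
  | succ m ih => exact mul_pos (qnum_pos hq _) ih

end Scratch



namespace Scratch2
open Scratch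

/-- solution of the recurrence x(n+2) = x(n+1) + [n+2] x(n) -/
noncomputable def sol (q x0 x1 : ℝ) : ℕ → ℝ
  | 0 => x0
  | 1 => x1
  | n + 2 => sol q x0 x1 (n + 1) + qnum q (n + 2) * sol q x0 x1 n

variable {q : ℝ}

lemma sol_pos (hq : 1 < q) {x0 x1 : ℝ} (h0 : 0 < x0) (h1 : 0 < x1) :
    ∀ n, 0 < sol q x0 x1 n := by
  have key : ∀ n, 0 < sol q x0 x1 n ∧ 0 < sol q x0 x1 (n + 1) := by
    intro n
    induction n with
    | zero => exact ⟨h0, h1⟩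
    | succ m ih =>
        refine ⟨ih.2, ?_⟩
        show 0 < sol q x0 x1 (m + 1) + qnum q (m + 2) * sol q x0 x1 m
        have := qnum_pos hq (m + 1)
        nlinarith [ih.1, ih.2]
  exact fun n => (key n).1

lemma sol_unique (f : ℕ → ℝ)
    (hrec : ∀ n, f (n + 2) = f (n + 1) + qnum q (n + 2) * f n) :
    ∀ n, f n = sol q (f 0) (f 1) n := by
  have key : ∀ n, f n = sol q (f 0) (f 1) n ∧ f (n+1) = sol q (f 0) (f 1) (n+1) := by
    intro n
    induction n with
    | zero => exact ⟨rfl, rfl⟩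
    | succ m ih =>
        refine ⟨ih.2, ?_⟩
        show f (m + 2) = sol q (f 0) (f 1) (m + 1) + qnum q (m + 2) * sol q (f 0) (f 1) m
        rw [hrec m, ih.1, ih.2]
  exact fun n => (key n).1

/-- α_{m} vanishes for n too small -/
lemma alphaC_vanish (m n : ℕ) (h : n < 2 * m + 1) : alphaC q (m + 1) n = 0 := by
  show (∑ k ∈ Finset.Icc (2 * m + 1) n, qnum q k * alphaC q m (k - 2)) = 0
  rw [Finset.Icc_eq_empty (by omega)]
  simp

lemma betaC_vanish (m n : ℕ) (h : n < 2 * m + 2) : betaC q (m + 1) n = 0 := by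
  show (∑ k ∈ Finset.Icc (2 * m + 2) n, qnum q k * betaC q m (k - 2)) = 0
  rw [Finset.Icc_eq_empty (by omega)]
  simp

lemma alphaC_step (m n : ℕ) :
    alphaC q (m + 1) (n + 2) = alphaC q (m + 1) (n + 1) + qnum q (n + 2) * alphaC q m n := by
  by_cases h : 2 * m + 1 ≤ n + 2
  · show (∑ k ∈ Finset.Icc (2 * m + 1) (n + 2), qnum q k * alphaC q m (k - 2)) = _
    rw [Finset.sum_Icc_succ_top h]
    norm_num
    rfl
  · push_neg at h
    rw [alphaC_vanish m (n+2) (by omega), alphaC_vanish m (n+1) (by omega)]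
    have hm : ∃ m', m = m' + 1 := ⟨m - 1, by omega⟩
    obtain ⟨m', rfl⟩ := hm
    rw [alphaC_vanish m' n (by omega)]
    ring

lemma betaC_step (m n : ℕ) :
    betaC q (m + 1) (n + 2) = betaC q (m + 1) (n + 1) + qnum q (n + 2) * betaC q m n := by
  by_cases h : 2 * m + 2 ≤ n + 2
  · show (∑ k ∈ Finset.Icc (2 * m + 2) (n + 2), qnum q k * betaC q m (k - 2)) = _
    rw [Finset.sum_Icc_succ_top h]
    norm_num
    rfl
  · push_neg at h
    rw [betaC_vanish m (n+2) (by omega), betaC_vanish m (n+1) (by omega)]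
    have hm : ∃ m', m = m' + 1 := ⟨m - 1, by omega⟩
    obtain ⟨m', rfl⟩ := hm
    rw [betaC_vanish m' n (by omega)]
    ring

end Scratch2

namespace Scratch3
open Scratch Scratch2

variable {q : ℝ}

/-- full alpha sum -/
noncomputable def SA (q : ℝ) (n : ℕ) : ℝ := ∑ m ∈ Finset.range (n + 2), alphaC q m n
noncomputable def SB (q : ℝ) (n : ℕ) : ℝ := ∑ m ∈ Finset.range (n + 2), betaC q m n

noncomputable def G (q : ℝ) : ℕ → ℝ := sol q 1 2
noncomputable def H (q : ℝ) : ℕ → ℝ := sol q 1 1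

lemma G_zero : G q 0 = 1 := rfl
lemma G_one : G q 1 = 2 := rfl
lemma H_zero : H q 0 = 1 := rfl
lemma H_one : H q 1 = 1 := rfl
lemma G_step (n : ℕ) : G q (n + 2) = G q (n + 1) + qnum q (n + 2) * G q n := rfl
lemma H_step (n : ℕ) : H q (n + 2) = H q (n + 1) + qnum q (n + 2) * H q n := rfl
lemma G_pos (hq : 1 < q) (n : ℕ) : 0 < G q n := sol_pos hq one_pos two_pos n
lemma H_pos (hq : 1 < q) (n : ℕ) : 0 < H q n := sol_pos hq one_pos one_pos n

lemma alphaC_zero_eq (n : ℕ) : alphaC q 0 n = 1 := rfl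
lemma betaC_zero_eq (n : ℕ) : betaC q 0 n = 1 := rfl

lemma SA_zero : SA q 0 = 1 := by
  show alphaC q 0 0 + (alphaC q 1 0 + 0) = 1
  rw [alphaC_zero_eq, alphaC_vanish 0 0 (by omega)]
  ring

lemma SA_one (hq : 1 < q) : SA q 1 = 2 := by
  show alphaC q 0 1 + (alphaC q 1 1 + (alphaC q 2 1 + 0)) = 2
  rw [alphaC_zero_eq, alphaC_vanish 1 1 (by omega)]
  have h1 : alphaC q 1 1 = 1 := by
    show (∑ k ∈ Finset.Icc 1 1, qnum q k * alphaC q 0 (k - 2)) = 1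
    rw [Finset.Icc_self, Finset.sum_singleton, alphaC_zero_eq, qnum_one hq]
    ring
  rw [h1]; ring

lemma SB_zero : SB q 0 = 1 := by
  show betaC q 0 0 + (betaC q 1 0 + 0) = 1
  rw [betaC_zero_eq, betaC_vanish 0 0 (by omega)]
  ring

lemma SB_one : SB q 1 = 1 := by
  show betaC q 0 1 + (betaC q 1 1 + (betaC q 2 1 + 0)) = 1
  rw [betaC_zero_eq, betaC_vanish 0 1 (by omega), betaC_vanish 1 1 (by omega)]
  ring

lemma SA_pad (n N : ℕ) (h : n + 2 ≤ N) :
    SA q n = ∑ m ∈ Finset.range N, alphaC q m n := by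
  rw [SA]
  apply Finset.sum_subset (Finset.range_subset_range.mpr h)
  intro m hm hnm
  simp only [Finset.mem_range] at hm hnm
  have : ∃ m', m = m' + 1 := ⟨m - 1, by omega⟩
  obtain ⟨m', rfl⟩ := this
  exact alphaC_vanish m' n (by omega)

lemma SB_pad (n N : ℕ) (h : n + 2 ≤ N) :
    SB q n = ∑ m ∈ Finset.range N, betaC q m n := by
  rw [SB]
  apply Finset.sum_subset (Finset.range_subset_range.mpr h)
  intro m hm hnm
  simp only [Finset.mem_range] at hm hnm
  have : ∃ m', m = m' + 1 := ⟨m - 1, by omega⟩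
  obtain ⟨m', rfl⟩ := this
  exact betaC_vanish m' n (by omega)

lemma SA_step (n : ℕ) : SA q (n + 2) = SA q (n + 1) + qnum q (n + 2) * SA q n := by
  have l1 : SA q (n + 2) = ∑ m ∈ Finset.range (n + 5), alphaC q m (n + 2) := SA_pad _ _ (by omega)
  rw [l1, Finset.sum_range_succ']
  have l2 : ∀ m, alphaC q (m + 1) (n + 2)
      = alphaC q (m + 1) (n + 1) + qnum q (n + 2) * alphaC q m n := fun m => alphaC_step m n
  rw [Finset.sum_congr rfl (fun m _ => l2 m), Finset.sum_add_distrib, ← Finset.mul_sum]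
  rw [alphaC_zero_eq]
  have l3 : SA q (n + 1) = alphaC q 0 (n+1) + ∑ m ∈ Finset.range (n + 4), alphaC q (m+1) (n + 1) := by
    rw [SA_pad (n+1) (n+5) (by omega), Finset.sum_range_succ']
    ring
  have l4 : SA q n = ∑ m ∈ Finset.range (n + 4), alphaC q m n := SA_pad _ _ (by omega)
  rw [l3, l4]
  simp only [alphaC_zero_eq]
  ring

lemma SB_step (n : ℕ) : SB q (n + 2) = SB q (n + 1) + qnum q (n + 2) * SB q n := by
  have l1 : SB q (n + 2) = ∑ m ∈ Finset.range (n + 5), betaC q m (n + 2) := SB_pad _ _ (by omega)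
  rw [l1, Finset.sum_range_succ']
  have l2 : ∀ m, betaC q (m + 1) (n + 2)
      = betaC q (m + 1) (n + 1) + qnum q (n + 2) * betaC q m n := fun m => betaC_step m n
  rw [Finset.sum_congr rfl (fun m _ => l2 m), Finset.sum_add_distrib, ← Finset.mul_sum]
  rw [betaC_zero_eq]
  have l3 : SB q (n + 1) = betaC q 0 (n+1) + ∑ m ∈ Finset.range (n + 4), betaC q (m+1) (n + 1) := by
    rw [SB_pad (n+1) (n+5) (by omega), Finset.sum_range_succ']
    ring
  have l4 : SB q n = ∑ m ∈ Finset.range (n + 4), betaC q m n := SB_pad _ _ (by omega)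
  rw [l3, l4]
  simp only [betaC_zero_eq]
  ring

lemma SA_eq_G (hq : 1 < q) (n : ℕ) : SA q n = G q n := by
  have := sol_unique (q := q) (SA q) SA_step n
  rwa [SA_zero, SA_one hq] at this

lemma SB_eq_H (n : ℕ) : SB q n = H q n := by
  have := sol_unique (q := q) (SB q) SB_step n
  rwa [SB_zero, SB_one] at this

end Scratch3

namespace Scratch4
open Scratch Scratch2 Scratch3

variable {q : ℝ}

lemma alphaC_diag (hq : 1 < q) : ∀ m : ℕ, alphaC q (m + 1) (2 * m + 1) = oddDF q (m + 1) := by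
  intro m
  induction m with
  | zero =>
      show (∑ k ∈ Finset.Icc 1 1, qnum q k * alphaC q 0 (k - 2)) = qnum q 1 * oddDF q 0
      rw [Finset.Icc_self, Finset.sum_singleton]
      rfl
  | succ m ih =>
      show (∑ k ∈ Finset.Icc (2*(m+1)+1) (2*(m+1)+1), qnum q k * alphaC q (m+1) (k - 2)) = _
      rw [Finset.Icc_self, Finset.sum_singleton]
      have e : 2 * (m + 1) + 1 - 2 = 2 * m + 1 := by omega
      rw [e, ih]
      show _ = qnum q (2 * (m + 1) + 1) * oddDF q (m + 1)
      rfl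

lemma betaC_diag (hq : 1 < q) : ∀ m : ℕ, betaC q (m + 1) (2 * m + 2) = evenDF q (m + 1) := by
  intro m
  induction m with
  | zero =>
      show (∑ k ∈ Finset.Icc 2 2, qnum q k * betaC q 0 (k - 2)) = qnum q 2 * evenDF q 0
      rw [Finset.Icc_self, Finset.sum_singleton]
      rfl
  | succ m ih =>
      show (∑ k ∈ Finset.Icc (2*(m+1)+2) (2*(m+1)+2), qnum q k * betaC q (m+1) (k - 2)) = _
      rw [Finset.Icc_self, Finset.sum_singleton]
      have e : 2 * (m + 1) + 2 - 2 = 2 * m + 2 := by omega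
      rw [e, ih]
      show _ = qnum q (2 * (m + 2)) * evenDF q (m + 1)
      have e2 : 2 * (m + 1) + 2 = 2 * (m + 2) := by omega
      rw [e2]

lemma sumA_even (hq : 1 < q) (k : ℕ) :
    ∑ m ∈ Finset.range (k + 1), alphaC q m (2 * k) = G q (2 * k) := by
  rw [← SA_eq_G hq]
  symm
  rw [SA_pad (2*k) (2*k+2) (by omega)]
  symm
  apply Finset.sum_subset (Finset.range_subset_range.mpr (by omega))
  intro m hm hnm
  simp only [Finset.mem_range] at hm hnm
  have : ∃ m', m = m' + 1 := ⟨m - 1, by omega⟩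
  obtain ⟨m', rfl⟩ := this
  exact alphaC_vanish m' (2*k) (by omega)

lemma sumA_odd (hq : 1 < q) (k : ℕ) :
    ∑ m ∈ Finset.range (k + 1), alphaC q m (2 * k + 1) = G q (2 * k + 1) - oddDF q (k + 1) := by
  have full : SA q (2*k+1) = ∑ m ∈ Finset.range (k + 2), alphaC q m (2 * k + 1) := by
    rw [SA_pad (2*k+1) (2*k+3) (by omega)]
    symm
    apply Finset.sum_subset (Finset.range_subset_range.mpr (by omega))
    intro m hm hnm
    simp only [Finset.mem_range] at hm hnm
    have : ∃ m', m = m' + 1 := ⟨m - 1, by omega⟩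
    obtain ⟨m', rfl⟩ := this
    exact alphaC_vanish m' (2*k+1) (by omega)
  rw [Finset.sum_range_succ] at full
  have e : 2 * k + 1 = 2 * k + 1 := rfl
  rw [alphaC_diag hq k] at full
  rw [← SA_eq_G hq, full]
  ring

lemma sumB_odd (hq : 1 < q) (k : ℕ) :
    ∑ m ∈ Finset.range (k + 1), betaC q m (2 * k + 1) = H q (2 * k + 1) := by
  rw [← SB_eq_H]
  symm
  rw [SB_pad (2*k+1) (2*k+3) (by omega)]
  symm
  apply Finset.sum_subset (Finset.range_subset_range.mpr (by omega))
  intro m hm hnm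
  simp only [Finset.mem_range] at hm hnm
  have : ∃ m', m = m' + 1 := ⟨m - 1, by omega⟩
  obtain ⟨m', rfl⟩ := this
  exact betaC_vanish m' (2*k+1) (by omega)

lemma sumB_even (hq : 1 < q) (k : ℕ) :
    ∑ m ∈ Finset.range (k + 1), betaC q m (2 * k + 2) = H q (2 * k + 2) - evenDF q (k + 1) := by
  have full : SB q (2*k+2) = ∑ m ∈ Finset.range (k + 2), betaC q m (2 * k + 2) := by
    rw [SB_pad (2*k+2) (2*k+4) (by omega)]
    symm
    apply Finset.sum_subset (Finset.range_subset_range.mpr (by omega))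
    intro m hm hnm
    simp only [Finset.mem_range] at hm hnm
    have : ∃ m', m = m' + 1 := ⟨m - 1, by omega⟩
    obtain ⟨m', rfl⟩ := this
    exact betaC_vanish m' (2*k+2) (by omega)
  rw [Finset.sum_range_succ, betaC_diag hq k] at full
  rw [← SB_eq_H, full]
  ring

end Scratch4

namespace Scratch5
open Scratch Scratch2 Scratch3 Scratch4

variable {q : ℝ}

noncomputable def tA (q : ℝ) (k : ℕ) : ℝ := G q (2 * k) / oddDF q (k + 1)
noncomputable def tS (q : ℝ) (k : ℕ) : ℝ := G q (2 * k + 1) / evenDF q (k + 1)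
noncomputable def tC (q : ℝ) (k : ℕ) : ℝ := H q (2 * k + 1) / evenDF q (k + 1)
noncomputable def tD (q : ℝ) (k : ℕ) : ℝ := H q (2 * k) / oddDF q (k + 1)

lemma oddDF_step (n : ℕ) : oddDF q (n + 1) = qnum q (2 * n + 1) * oddDF q n := rfl
lemma evenDF_step (n : ℕ) : evenDF q (n + 1) = qnum q (2 * n + 2) * evenDF q n := by
  show qnum q (2 * (n + 1)) * evenDF q n = _
  have e : 2 * (n + 1) = 2 * n + 2 := by omega
  rw [e]

lemma telA (hq : 1 < q) (n : ℕ) :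
    1 + ∑ k ∈ Finset.range (n + 1), tA q k = G q (2 * n + 1) / oddDF q (n + 1) := by
  induction n with
  | zero =>
      have h1 : oddDF q 1 = 1 := by
        rw [oddDF_step]
        show qnum q 1 * 1 = 1
        rw [qnum_one hq]; ring
      simp [tA, h1, G_zero, G_one]
      norm_num
  | succ n ih =>
      rw [Finset.sum_range_succ, ← add_assoc, ih]
      have hodd1 := oddDF_pos hq (n + 1)
      have hodd2 := oddDF_pos hq (n + 2)
      have hq1 := qnum_pos hq (2 * n + 2)
      have hstep : oddDF q (n + 2) = qnum q (2 * n + 3) * oddDF q (n + 1) := oddDF_step (n + 1)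
      have hG : G q (2 * (n+1) + 1) = G q (2 * (n+1)) + qnum q (2 * n + 3) * G q (2 * n + 1) := by
        rw [show 2 * (n+1) + 1 = 2 * n + 1 + 2 from by omega, G_step,
          show 2 * n + 1 + 1 = 2 * (n+1) from by omega,
          show 2 * n + 1 + 2 = 2 * n + 3 from by omega]
      rw [tA, hG, hstep]
      have n1 : oddDF q (n+1) ≠ 0 := ne_of_gt hodd1
      have n2 : qnum q (2*n+3) ≠ 0 := ne_of_gt (qnum_pos hq (2*n+2))
      field_simp
      ring

lemma telS (hq : 1 < q) (n : ℕ) :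
    1 + ∑ k ∈ Finset.range n, tS q k = G q (2 * n) / evenDF q n := by
  induction n with
  | zero =>
      show 1 + 0 = G q 0 / evenDF q 0
      show 1 + 0 = (1 : ℝ) / 1
      norm_num
  | succ n ih =>
      rw [Finset.sum_range_succ, ← add_assoc, ih]
      have he1 := evenDF_pos hq n
      have he2 := evenDF_pos hq (n + 1)
      have hq1 := qnum_pos hq (2 * n + 1)
      have hstep : evenDF q (n + 1) = qnum q (2 * n + 2) * evenDF q n := evenDF_step n
      have hG : G q (2 * (n+1)) = G q (2 * n + 1) + qnum q (2 * n + 2) * G q (2 * n) := by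
        rw [show 2 * (n+1) = 2 * n + 2 from by omega, G_step]
      rw [tS, hG, hstep]
      have n1 : evenDF q n ≠ 0 := ne_of_gt he1
      have n2 : qnum q (2*n+2) ≠ 0 := ne_of_gt (qnum_pos hq (2*n+1))
      field_simp
      ring

lemma telC (hq : 1 < q) (n : ℕ) :
    1 + ∑ k ∈ Finset.range n, tC q k = H q (2 * n) / evenDF q n := by
  induction n with
  | zero =>
      show 1 + 0 = H q 0 / evenDF q 0
      show 1 + 0 = (1 : ℝ) / 1
      norm_num
  | succ n ih =>
      rw [Finset.sum_range_succ, ← add_assoc, ih]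
      have he1 := evenDF_pos hq n
      have he2 := evenDF_pos hq (n + 1)
      have hstep : evenDF q (n + 1) = qnum q (2 * n + 2) * evenDF q n := evenDF_step n
      have hH : H q (2 * (n+1)) = H q (2 * n + 1) + qnum q (2 * n + 2) * H q (2 * n) := by
        rw [show 2 * (n+1) = 2 * n + 2 from by omega, H_step]
      rw [tC, hH, hstep]
      have n1 : evenDF q n ≠ 0 := ne_of_gt he1
      have n2 : qnum q (2*n+2) ≠ 0 := ne_of_gt (qnum_pos hq (2*n+1))
      field_simp
      ring

lemma telD (hq : 1 < q) (n : ℕ) :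
    ∑ k ∈ Finset.range (n + 1), tD q k = H q (2 * n + 1) / oddDF q (n + 1) := by
  induction n with
  | zero =>
      have h1 : oddDF q 1 = 1 := by
        rw [oddDF_step]
        show qnum q 1 * 1 = 1
        rw [qnum_one hq]; ring
      simp [tD, h1, H_zero, H_one]
  | succ n ih =>
      rw [Finset.sum_range_succ, ih]
      have hodd1 := oddDF_pos hq (n + 1)
      have hodd2 := oddDF_pos hq (n + 2)
      have hstep : oddDF q (n + 2) = qnum q (2 * n + 3) * oddDF q (n + 1) := oddDF_step (n + 1)
      have hH : H q (2 * (n+1) + 1) = H q (2 * (n+1)) + qnum q (2 * n + 3) * H q (2 * n + 1) := by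
        rw [show 2 * (n+1) + 1 = 2 * n + 1 + 2 from by omega, H_step,
          show 2 * n + 1 + 1 = 2 * (n+1) from by omega,
          show 2 * n + 1 + 2 = 2 * n + 3 from by omega]
      rw [tD, hH, hstep]
      have n1 : oddDF q (n+1) ≠ 0 := ne_of_gt hodd1
      have n2 : qnum q (2*n+3) ≠ 0 := ne_of_gt (qnum_pos hq (2*n+2))
      field_simp
      ring

lemma wronskian (hq : 1 < q) (n : ℕ) :
    G q (2 * n + 1) * H q (2 * n) - G q (2 * n) * H q (2 * n + 1)
      = oddDF q (n + 1) * evenDF q n := by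
  induction n with
  | zero =>
      show G q 1 * H q 0 - G q 0 * H q 1 = oddDF q 1 * evenDF q 0
      rw [G_zero, G_one, H_zero, H_one]
      show (2 : ℝ) * 1 - 1 * 1 = qnum q 1 * 1 * 1
      rw [qnum_one hq]; ring
  | succ n ih =>
      have key : ∀ m : ℕ, G q (m + 2) * H q (m + 1) - G q (m + 1) * H q (m + 2)
          = - qnum q (m + 2) * (G q (m + 1) * H q m - G q m * H q (m + 1)) := by
        intro m
        rw [G_step, H_step]
        ring
      have s1 := key (2 * n)
      have s2 := key (2 * n + 1)
      rw [show 2 * (n+1) + 1 = 2 * n + 1 + 2 from by omega,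
        show 2 * (n+1) = 2 * n + 1 + 1 from by omega, s2,
        show 2 * n + 1 + 1 = 2 * n + 2 from by omega, s1, ih]
      have hodd : oddDF q (n + 2) = qnum q (2 * n + 3) * oddDF q (n + 1) := by
        rw [oddDF_step (n + 1), show 2 * (n+1) + 1 = 2 * n + 3 from by omega]
      have heven : evenDF q (n + 1) = qnum q (2 * n + 2) * evenDF q n := evenDF_step n
      rw [hodd, heven, show 2 * n + 1 + 2 = 2 * n + 3 from by omega]
      ring

end Scratch5

namespace Scratch6
open Scratch Scratch2 Scratch3 Scratch4 Scratch5 Finset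

/-- Master bound: if `t (k+1) ≤ r^(k+1) * (c + partial sums) + θ * t k` with `θ, r < 1`,
then `t` is summable. -/
lemma master {t : ℕ → ℝ} {θ r c : ℝ} (hθ0 : 0 ≤ θ) (hθ1 : θ < 1) (hr0 : 0 ≤ r) (hr1 : r < 1)
    (hc : 0 ≤ c) (ht0 : ∀ k, 0 ≤ t k)
    (hrec : ∀ k, t (k + 1) ≤ r ^ (k + 1) * (c + ∑ j ∈ range (k + 1), t j) + θ * t k) :
    Summable t := by
  set γ : ℝ := θ / (1 - θ) with hγ
  have h1θ : 0 < 1 - θ := by linarith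
  have hγ0 : 0 ≤ γ := div_nonneg hθ0 (le_of_lt h1θ)
  have hγθ : (1 + γ) * θ = γ := by
    rw [hγ]
    field_simp [h1θ.ne'] <;> ring
  set V : ℕ → ℝ := fun k => c + (∑ j ∈ range (k + 1), t j) + γ * t k with hV
  have hsum0 : ∀ k, 0 ≤ ∑ j ∈ range k, t j := fun k => Finset.sum_nonneg fun j _ => ht0 j
  have hV0 : ∀ k, 0 ≤ V k := by
    intro k
    have := hsum0 (k + 1)
    have := ht0 k
    simp only [hV]
    nlinarith
  have hVle : ∀ k, c + ∑ j ∈ range (k + 1), t j ≤ V k := by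
    intro k
    simp only [hV]
    nlinarith [ht0 k]
  have step : ∀ k, V (k + 1) ≤ (1 + (1 + γ) * r ^ (k + 1)) * V k := by
    intro k
    have h1 := hrec k
    have hS : ∑ j ∈ range (k + 2), t j = (∑ j ∈ range (k + 1), t j) + t (k + 1) :=
      Finset.sum_range_succ t (k + 1)
    have hrpos : 0 ≤ r ^ (k + 1) := pow_nonneg hr0 _
    have hcs : 0 ≤ c + ∑ j ∈ range (k + 1), t j := by
      have := hsum0 (k + 1); linarith
    -- V (k+1) = (c + S k) + (1 + γ) * t (k+1)
    have e1 : V (k + 1) = (c + ∑ j ∈ range (k + 1), t j) + (1 + γ) * t (k + 1) := by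
      simp only [hV, hS]; ring
    have e2 : (1 + γ) * t (k + 1)
        ≤ (1 + γ) * (r ^ (k + 1) * (c + ∑ j ∈ range (k + 1), t j)) + γ * t k := by
      calc (1 + γ) * t (k + 1)
          ≤ (1 + γ) * (r ^ (k + 1) * (c + ∑ j ∈ range (k + 1), t j) + θ * t k) := by
            apply mul_le_mul_of_nonneg_left h1 (by linarith)
        _ = (1 + γ) * (r ^ (k + 1) * (c + ∑ j ∈ range (k + 1), t j)) + ((1 + γ) * θ) * t k := by
            ring
        _ = (1 + γ) * (r ^ (k + 1) * (c + ∑ j ∈ range (k + 1), t j)) + γ * t k := by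
            rw [hγθ]
    calc V (k + 1) ≤ (c + ∑ j ∈ range (k + 1), t j)
          + ((1 + γ) * (r ^ (k + 1) * (c + ∑ j ∈ range (k + 1), t j)) + γ * t k) := by
          rw [e1]; linarith
      _ = (1 + (1 + γ) * r ^ (k + 1)) * (c + ∑ j ∈ range (k + 1), t j) + γ * t k := by ring
      _ ≤ (1 + (1 + γ) * r ^ (k + 1)) * ((c + ∑ j ∈ range (k + 1), t j) + γ * t k) := by
          have hcoef : (1 : ℝ) ≤ 1 + (1 + γ) * r ^ (k + 1) := by nlinarith
          nlinarith [mul_nonneg hγ0 (ht0 k)]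
      _ = (1 + (1 + γ) * r ^ (k + 1)) * V k := by simp only [hV]
  have hgeo : Summable (fun j : ℕ => r ^ j) := summable_geometric_of_lt_one hr0 hr1
  have hgeosum : ∀ k, ∑ j ∈ range k, r ^ (j + 1) ≤ (1 - r)⁻¹ := by
    intro k
    calc ∑ j ∈ range k, r ^ (j + 1) ≤ ∑ j ∈ range (k + 1), r ^ j := by
          rw [Finset.sum_range_succ']
          have : 0 ≤ r ^ 0 := by norm_num
          simp only [pow_succ]
          nlinarith [Finset.sum_nonneg (fun (j : ℕ) (_ : j ∈ range k) => pow_nonneg hr0 j)]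
      _ ≤ ∑' j : ℕ, r ^ j := Summable.sum_le_tsum _ (fun j _ => pow_nonneg hr0 j) hgeo
      _ = (1 - r)⁻¹ := tsum_geometric_of_lt_one hr0 hr1
  have expbound : ∀ k, V k ≤ V 0 * Real.exp ((1 + γ) * ∑ j ∈ range k, r ^ (j + 1)) := by
    intro k
    induction k with
    | zero => simp
    | succ k ih =>
        have h2 : V (k + 1) ≤ Real.exp ((1 + γ) * r ^ (k + 1)) * V k := by
          have h3 : 1 + (1 + γ) * r ^ (k + 1) ≤ Real.exp ((1 + γ) * r ^ (k + 1)) := by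
            have := Real.add_one_le_exp ((1 + γ) * r ^ (k + 1))
            linarith
          calc V (k + 1) ≤ (1 + (1 + γ) * r ^ (k + 1)) * V k := step k
            _ ≤ Real.exp ((1 + γ) * r ^ (k + 1)) * V k :=
                mul_le_mul_of_nonneg_right h3 (hV0 k)
        calc V (k + 1) ≤ Real.exp ((1 + γ) * r ^ (k + 1)) * V k := h2
          _ ≤ Real.exp ((1 + γ) * r ^ (k + 1)) * (V 0 * Real.exp ((1 + γ) * ∑ j ∈ range k, r ^ (j + 1))) :=
              mul_le_mul_of_nonneg_left ih (le_of_lt (Real.exp_pos _))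
          _ = V 0 * Real.exp ((1 + γ) * ∑ j ∈ range (k + 1), r ^ (j + 1)) := by
              rw [Finset.sum_range_succ, mul_add, Real.exp_add]
              ring
  set M : ℝ := V 0 * Real.exp ((1 + γ) * (1 - r)⁻¹) with hM
  have hboundV : ∀ k, V k ≤ M := by
    intro k
    calc V k ≤ V 0 * Real.exp ((1 + γ) * ∑ j ∈ range k, r ^ (j + 1)) := expbound k
      _ ≤ M := by
        rw [hM]
        apply mul_le_mul_of_nonneg_left _ (hV0 0)
        apply Real.exp_le_exp.mpr
        apply mul_le_mul_of_nonneg_left (hgeosum k) (by linarith)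
  apply summable_of_sum_range_le (c := M) ht0
  intro n
  cases n with
  | zero => simp; calc (0:ℝ) ≤ V 0 := hV0 0
      _ ≤ M := hboundV 0
  | succ k =>
      calc ∑ j ∈ range (k + 1), t j ≤ c + ∑ j ∈ range (k + 1), t j := by linarith
        _ ≤ V k := hVle k
        _ ≤ M := hboundV k

end Scratch6

namespace Scratch7
open Scratch Scratch2 Scratch3 Scratch4 Scratch5 Scratch6 Finset

variable {q : ℝ}

lemma inv_lt_one' (hq : 1 < q) : q⁻¹ < 1 := inv_lt_one_of_one_lt₀ hq
lemma inv_nonneg' (hq : 1 < q) : (0:ℝ) ≤ q⁻¹ := le_of_lt (inv_pos.mpr (qzero_lt hq))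

lemma one_le_fact (hq : 1 < q) (k N : ℕ) (h : k + 1 ≤ N) :
    1 ≤ q⁻¹ ^ (k + 1) * qnum q (N + 1) := by
  have h1 : q ^ (k + 1) ≤ q ^ N := pow_le_pow_right₀ (le_of_lt hq) h
  have h2 : q ^ N ≤ qnum q (N + 1) := pow_le_qnum hq N
  have h3 : (0:ℝ) < q⁻¹ ^ (k + 1) := pow_pos (inv_pos.mpr (qzero_lt hq)) _
  have h4 : q⁻¹ ^ (k + 1) * q ^ (k + 1) = 1 := by
    rw [← mul_pow, inv_mul_cancel₀ (ne_of_gt (qzero_lt hq)), one_pow]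
  calc (1:ℝ) = q⁻¹ ^ (k + 1) * q ^ (k + 1) := h4.symm
    _ ≤ q⁻¹ ^ (k + 1) * qnum q (N + 1) := by
        apply mul_le_mul_of_nonneg_left (le_trans h1 h2) (le_of_lt h3)

lemma qnum_le_inv_mul (hq : 1 < q) (n : ℕ) : qnum q n ≤ q⁻¹ * qnum q (n + 1) := by
  have h := q_mul_qnum_le hq n
  have hq0 : (0:ℝ) < q := qzero_lt hq
  have : q⁻¹ * (q * qnum q n) ≤ q⁻¹ * qnum q (n + 1) :=
    mul_le_mul_of_nonneg_left h (inv_nonneg' hq)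
  rwa [← mul_assoc, inv_mul_cancel₀ (ne_of_gt hq0), one_mul] at this

lemma core (hq : 1 < q) {g1 g0 a : ℝ} {k N : ℕ}
    (hg1 : 0 ≤ g1) (hg0 : 0 ≤ g0) (ha : 0 < a) (hkN : k + 1 ≤ N) :
    (g1 + qnum q N * g0) / (qnum q (N + 1) * a)
      ≤ q⁻¹ ^ (k + 1) * (g1 / a) + q⁻¹ * (g0 / a) := by
  have hw : 0 < qnum q (N + 1) := qnum_pos hq N
  have f1 := one_le_fact hq k N hkN
  have f2 := qnum_le_inv_mul hq N
  have e : q⁻¹ ^ (k + 1) * (g1 / a) + q⁻¹ * (g0 / a) = (q⁻¹ ^ (k + 1) * g1 + q⁻¹ * g0) / a := by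
    field_simp
  rw [e, div_le_div_iff₀ (mul_pos hw ha) ha]
  have key : g1 + qnum q N * g0 ≤ (q⁻¹ ^ (k + 1) * g1 + q⁻¹ * g0) * qnum q (N + 1) := by
    have t1 : g1 ≤ q⁻¹ ^ (k + 1) * qnum q (N + 1) * g1 := by nlinarith
    have t2 : qnum q N * g0 ≤ q⁻¹ * qnum q (N + 1) * g0 := by nlinarith
    nlinarith
  nlinarith [mul_le_mul_of_nonneg_right key (le_of_lt ha), mul_pos hw ha]

lemma tA_nonneg (hq : 1 < q) (k : ℕ) : 0 ≤ tA q k :=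
  le_of_lt (div_pos (G_pos hq _) (oddDF_pos hq _))
lemma tS_nonneg (hq : 1 < q) (k : ℕ) : 0 ≤ tS q k :=
  le_of_lt (div_pos (G_pos hq _) (evenDF_pos hq _))
lemma tC_nonneg (hq : 1 < q) (k : ℕ) : 0 ≤ tC q k :=
  le_of_lt (div_pos (H_pos hq _) (evenDF_pos hq _))
lemma tD_nonneg (hq : 1 < q) (k : ℕ) : 0 ≤ tD q k :=
  le_of_lt (div_pos (H_pos hq _) (oddDF_pos hq _))

lemma summable_tA (hq : 1 < q) : Summable (tA q) := by
  apply master (θ := q⁻¹) (r := q⁻¹) (c := 1) (inv_nonneg' hq) (inv_lt_one' hq)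
    (inv_nonneg' hq) (inv_lt_one' hq) one_pos.le (tA_nonneg hq)
  intro k
  rw [telA hq k]
  show tA q (k + 1) ≤ _
  rw [tA, tA]
  have hG : G q (2 * (k + 1)) = G q (2 * k + 1) + qnum q (2 * k + 2) * G q (2 * k) := by
    rw [show 2 * (k + 1) = 2 * k + 2 from by omega, G_step]
  have hodd : oddDF q (k + 1 + 1) = qnum q (2 * k + 2 + 1) * oddDF q (k + 1) := by
    rw [oddDF_step (k + 1), show 2 * (k + 1) + 1 = 2 * k + 2 + 1 from by omega]
  rw [hG, hodd]
  exact core hq (le_of_lt (G_pos hq _)) (le_of_lt (G_pos hq _)) (oddDF_pos hq _) (by omega)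

lemma summable_tS (hq : 1 < q) : Summable (tS q) := by
  apply master (θ := q⁻¹) (r := q⁻¹) (c := 1) (inv_nonneg' hq) (inv_lt_one' hq)
    (inv_nonneg' hq) (inv_lt_one' hq) one_pos.le (tS_nonneg hq)
  intro k
  rw [telS hq (k + 1)]
  show tS q (k + 1) ≤ _
  rw [tS, tS]
  have hG : G q (2 * (k + 1) + 1) = G q (2 * (k + 1)) + qnum q (2 * k + 3) * G q (2 * k + 1) := by
    rw [show 2 * (k + 1) + 1 = 2 * k + 1 + 2 from by omega, G_step,
      show 2 * k + 1 + 1 = 2 * (k + 1) from by omega,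
      show 2 * k + 1 + 2 = 2 * k + 3 from by omega]
  have heven : evenDF q (k + 1 + 1) = qnum q (2 * k + 3 + 1) * evenDF q (k + 1) := by
    rw [evenDF_step (k + 1), show 2 * (k + 1) + 2 = 2 * k + 3 + 1 from by omega]
  rw [hG, heven]
  exact core hq (le_of_lt (G_pos hq _)) (le_of_lt (G_pos hq _)) (evenDF_pos hq _) (by omega)

lemma summable_tC (hq : 1 < q) : Summable (tC q) := by
  apply master (θ := q⁻¹) (r := q⁻¹) (c := 1) (inv_nonneg' hq) (inv_lt_one' hq)
    (inv_nonneg' hq) (inv_lt_one' hq) one_pos.le (tC_nonneg hq)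
  intro k
  rw [telC hq (k + 1)]
  show tC q (k + 1) ≤ _
  rw [tC, tC]
  have hH : H q (2 * (k + 1) + 1) = H q (2 * (k + 1)) + qnum q (2 * k + 3) * H q (2 * k + 1) := by
    rw [show 2 * (k + 1) + 1 = 2 * k + 1 + 2 from by omega, H_step,
      show 2 * k + 1 + 1 = 2 * (k + 1) from by omega,
      show 2 * k + 1 + 2 = 2 * k + 3 from by omega]
  have heven : evenDF q (k + 1 + 1) = qnum q (2 * k + 3 + 1) * evenDF q (k + 1) := by
    rw [evenDF_step (k + 1), show 2 * (k + 1) + 2 = 2 * k + 3 + 1 from by omega]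
  rw [hH, heven]
  exact core hq (le_of_lt (H_pos hq _)) (le_of_lt (H_pos hq _)) (evenDF_pos hq _) (by omega)

lemma summable_tD (hq : 1 < q) : Summable (tD q) := by
  apply master (θ := q⁻¹) (r := q⁻¹) (c := 0) (inv_nonneg' hq) (inv_lt_one' hq)
    (inv_nonneg' hq) (inv_lt_one' hq) le_rfl (tD_nonneg hq)
  intro k
  have h0 : (0:ℝ) + ∑ j ∈ range (k + 1), tD q j = H q (2 * k + 1) / oddDF q (k + 1) := by
    rw [zero_add, telD hq k]
  rw [h0]
  show tD q (k + 1) ≤ _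
  rw [tD, tD]
  have hH : H q (2 * (k + 1)) = H q (2 * k + 1) + qnum q (2 * k + 2) * H q (2 * k) := by
    rw [show 2 * (k + 1) = 2 * k + 2 from by omega, H_step]
  have hodd : oddDF q (k + 1 + 1) = qnum q (2 * k + 2 + 1) * oddDF q (k + 1) := by
    rw [oddDF_step (k + 1), show 2 * (k + 1) + 1 = 2 * k + 2 + 1 from by omega]
  rw [hH, hodd]
  exact core hq (le_of_lt (H_pos hq _)) (le_of_lt (H_pos hq _)) (oddDF_pos hq _) (by omega)

end Scratch7





namespace Scratch8
open Scratch Scratch2 Scratch3 Scratch4 Scratch5 Scratch6 Scratch7 Finset Filter Topology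

variable {q : ℝ}

noncomputable def psi (q : ℝ) (k : ℕ) : ℝ := oddDF q (k + 1) / evenDF q (k + 1)
noncomputable def phi (q : ℝ) (k : ℕ) : ℝ := evenDF q (k + 1) / oddDF q (k + 2)

lemma odd_le_even (hq : 1 < q) (n : ℕ) : q ^ n * oddDF q n ≤ evenDF q n := by
  induction n with
  | zero => norm_num [oddDF, evenDF]
  | succ n ih =>
      have hq0 := qzero_lt hq
      have h1 : 0 < oddDF q n := oddDF_pos hq n
      have h2 : 0 < qnum q (2 * n + 1) := qnum_pos hq (2 * n)
      have h3 := q_mul_qnum_le hq (2 * n + 1)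
      have h4 : 0 < evenDF q n := evenDF_pos hq n
      rw [oddDF_step, evenDF_step]
      have e : q ^ (n + 1) * (qnum q (2 * n + 1) * oddDF q n)
          = (q * qnum q (2 * n + 1)) * (q ^ n * oddDF q n) := by ring
      rw [e]
      calc (q * qnum q (2 * n + 1)) * (q ^ n * oddDF q n)
          ≤ (q * qnum q (2 * n + 1)) * evenDF q n := by
            apply mul_le_mul_of_nonneg_left ih
            positivity
        _ ≤ qnum q (2 * n + 2) * evenDF q n := mul_le_mul_of_nonneg_right h3 (le_of_lt h4)

lemma even_le_odd (hq : 1 < q) (n : ℕ) : q ^ n * evenDF q n ≤ oddDF q (n + 1) := by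
  induction n with
  | zero =>
      have : oddDF q 1 = qnum q 1 * 1 := rfl
      rw [this, qnum_one hq]
      norm_num [evenDF]
  | succ n ih =>
      have hq0 := qzero_lt hq
      have h1 : 0 < evenDF q n := evenDF_pos hq n
      have h2 : 0 < qnum q (2 * n + 2) := qnum_pos hq (2 * n + 1)
      have h3 := q_mul_qnum_le hq (2 * n + 2)
      have h4 : 0 < oddDF q (n + 1) := oddDF_pos hq (n + 1)
      rw [evenDF_step]
      have hodd : oddDF q (n + 2) = qnum q (2 * n + 3) * oddDF q (n + 1) := by
        rw [oddDF_step (n + 1), show 2 * (n + 1) + 1 = 2 * n + 3 from by omega]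
      rw [hodd]
      have e : q ^ (n + 1) * (qnum q (2 * n + 2) * evenDF q n)
          = (q * qnum q (2 * n + 2)) * (q ^ n * evenDF q n) := by ring
      rw [e]
      calc (q * qnum q (2 * n + 2)) * (q ^ n * evenDF q n)
          ≤ (q * qnum q (2 * n + 2)) * oddDF q (n + 1) := by
            apply mul_le_mul_of_nonneg_left ih
            positivity
        _ ≤ qnum q (2 * n + 3) * oddDF q (n + 1) := by
            apply mul_le_mul_of_nonneg_right _ (le_of_lt h4)
            calc q * qnum q (2 * n + 2) ≤ qnum q (2 * n + 2 + 1) := h3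
              _ = qnum q (2 * n + 3) := rfl

lemma psi_le (hq : 1 < q) (k : ℕ) : psi q k ≤ q⁻¹ ^ (k + 1) := by
  have h := odd_le_even hq (k + 1)
  have he : 0 < evenDF q (k + 1) := evenDF_pos hq (k + 1)
  have hp : (0:ℝ) < q ^ (k + 1) := pow_pos (qzero_lt hq) _
  rw [psi, div_le_iff₀ he]
  have h5 : q⁻¹ ^ (k + 1) * q ^ (k + 1) = 1 := by
    rw [← mul_pow, inv_mul_cancel₀ (ne_of_gt (qzero_lt hq)), one_pow]
  have h6 : q⁻¹ ^ (k + 1) * (q ^ (k + 1) * oddDF q (k + 1)) = oddDF q (k + 1) := by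
    rw [← mul_assoc, h5, one_mul]
  have h7 := mul_le_mul_of_nonneg_left h (pow_nonneg (inv_nonneg' hq) (k + 1))
  linarith
lemma phi_le (hq : 1 < q) (k : ℕ) : phi q k ≤ q⁻¹ ^ (k + 1) := by
  have h := even_le_odd hq (k + 1)
  have he : 0 < oddDF q (k + 2) := oddDF_pos hq (k + 2)
  have hp : (0:ℝ) < q ^ (k + 1) := pow_pos (qzero_lt hq) _
  rw [phi, div_le_iff₀ he]
  have h5 : q⁻¹ ^ (k + 1) * q ^ (k + 1) = 1 := by
    rw [← mul_pow, inv_mul_cancel₀ (ne_of_gt (qzero_lt hq)), one_pow]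
  have h6 : q⁻¹ ^ (k + 1) * (q ^ (k + 1) * evenDF q (k + 1)) = evenDF q (k + 1) := by
    rw [← mul_assoc, h5, one_mul]
  have h7 := mul_le_mul_of_nonneg_left h (pow_nonneg (inv_nonneg' hq) (k + 1))
  have e : (k + 1) + 1 = k + 2 := rfl
  rw [e] at h7
  linarith

lemma summable_geom_shift (hq : 1 < q) : Summable (fun k : ℕ => q⁻¹ ^ (k + 1)) := by
  have := summable_geometric_of_lt_one (inv_nonneg' hq) (inv_lt_one' hq)
  simpa only [pow_succ] using this.mul_right q⁻¹

lemma summable_psi (hq : 1 < q) : Summable (psi q) := by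
  apply Summable.of_nonneg_of_le _ (psi_le hq) (summable_geom_shift hq)
  intro k
  exact le_of_lt (div_pos (oddDF_pos hq _) (evenDF_pos hq _))

lemma summable_phi (hq : 1 < q) : Summable (phi q) := by
  apply Summable.of_nonneg_of_le _ (phi_le hq) (summable_geom_shift hq)
  intro k
  exact le_of_lt (div_pos (evenDF_pos hq _) (oddDF_pos hq _))

lemma Aalpha1_eq (hq : 1 < q) : Aalpha1 q = 1 + ∑' k, tA q k := by
  rw [Aalpha1]
  congr 1
  apply tsum_congr
  intro k
  rw [sumA_even hq k, inv_mul_eq_div, tA]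

lemma Abeta1_eq (hq : 1 < q) : Abeta1 q = 1 + ∑' k, tC q k := by
  rw [Abeta1]
  congr 1
  apply tsum_congr
  intro k
  rw [sumB_odd hq k, inv_mul_eq_div, tC]

lemma Salpha2_eq (hq : 1 < q) : Salpha2 q = 1 + ∑' k, tS q k := by
  have h1 : ∀ k : ℕ, (evenDF q (k + 1))⁻¹ * ∑ m ∈ Finset.range (k + 1), alphaC q m (2 * k + 1)
      = tS q k - psi q k := by
    intro k
    rw [sumA_odd hq k, inv_mul_eq_div, sub_div, tS, psi]
  have hsub : Summable (fun k => tS q k - psi q k) := (summable_tS hq).sub (summable_psi hq)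
  have hpsi : (fun k : ℕ => oddDF q (k + 1) / evenDF q (k + 1)) = psi q := rfl
  rw [Salpha2, tsum_congr h1, hpsi]
  have h2 : ∑' k, psi q k + ∑' k, (tS q k - psi q k) = ∑' k, tS q k := by
    rw [← Summable.tsum_add (summable_psi hq) hsub]
    apply tsum_congr
    intro k
    ring
  rw [add_assoc, h2]

lemma Sbeta2_eq (hq : 1 < q) : Sbeta2 q = ∑' k, tD q k := by
  have h1 : ∀ k : ℕ, (oddDF q (k + 2))⁻¹ * ∑ m ∈ Finset.range (k + 1), betaC q m (2 * k + 2)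
      = tD q (k + 1) - phi q k := by
    intro k
    rw [sumB_even hq k, inv_mul_eq_div, sub_div, tD, phi,
      show 2 * (k + 1) = 2 * k + 2 from by omega]
  have hshift : Summable (fun k => tD q (k + 1)) := by
    rw [summable_nat_add_iff 1]
    exact summable_tD hq
  have hsub : Summable (fun k => tD q (k + 1) - phi q k) := hshift.sub (summable_phi hq)
  have hphi : (fun k : ℕ => evenDF q (k + 1) / oddDF q (k + 2)) = phi q := rfl
  rw [Sbeta2, tsum_congr h1, hphi]
  have h2 : ∑' k, phi q k + ∑' k, (tD q (k + 1) - phi q k) = ∑' k, tD q (k + 1) := by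
    rw [← Summable.tsum_add (summable_phi hq) hsub]
    apply tsum_congr
    intro k
    ring
  rw [add_assoc, h2]
  have h3 : ∑' k, tD q k = tD q 0 + ∑' k, tD q (k + 1) := Summable.tsum_eq_zero_add (summable_tD hq)
  have h4 : tD q 0 = 1 := by
    rw [tD]
    show H q 0 / oddDF q 1 = 1
    have : oddDF q 1 = qnum q 1 * 1 := rfl
    rw [H_zero, this, qnum_one hq]
    norm_num
  rw [h3, h4]

lemma tendstoA (hq : 1 < q) :
    Tendsto (fun n => G q (2 * n + 1) / oddDF q (n + 1)) atTop (𝓝 (Aalpha1 q)) := by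
  have hs := (summable_tA hq).hasSum.tendsto_sum_nat
  have hs1 : Tendsto (fun n => ∑ i ∈ range (n + 1), tA q i) atTop (𝓝 (∑' k, tA q k)) :=
    hs.comp (tendsto_add_atTop_nat 1)
  have hfin : Tendsto (fun n => 1 + ∑ i ∈ range (n + 1), tA q i) atTop
      (𝓝 (1 + ∑' k, tA q k)) := Tendsto.const_add 1 hs1
  rw [Aalpha1_eq hq]
  refine Tendsto.congr (fun n => ?_) hfin
  exact telA hq n

lemma tendstoS (hq : 1 < q) :
    Tendsto (fun n => G q (2 * n) / evenDF q n) atTop (𝓝 (Salpha2 q)) := by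
  have hs := (summable_tS hq).hasSum.tendsto_sum_nat
  have hfin : Tendsto (fun n => 1 + ∑ i ∈ range n, tS q i) atTop
      (𝓝 (1 + ∑' k, tS q k)) := Tendsto.const_add 1 hs
  rw [Salpha2_eq hq]
  refine Tendsto.congr (fun n => ?_) hfin
  exact telS hq n

lemma tendstoC (hq : 1 < q) :
    Tendsto (fun n => H q (2 * n) / evenDF q n) atTop (𝓝 (Abeta1 q)) := by
  have hs := (summable_tC hq).hasSum.tendsto_sum_nat
  have hfin : Tendsto (fun n => 1 + ∑ i ∈ range n, tC q i) atTop
      (𝓝 (1 + ∑' k, tC q k)) := Tendsto.const_add 1 hs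
  rw [Abeta1_eq hq]
  refine Tendsto.congr (fun n => ?_) hfin
  exact telC hq n

lemma tendstoD (hq : 1 < q) :
    Tendsto (fun n => H q (2 * n + 1) / oddDF q (n + 1)) atTop (𝓝 (Sbeta2 q)) := by
  have hs := (summable_tD hq).hasSum.tendsto_sum_nat
  have hs1 : Tendsto (fun n => ∑ i ∈ range (n + 1), tD q i) atTop (𝓝 (∑' k, tD q k)) :=
    hs.comp (tendsto_add_atTop_nat 1)
  rw [Sbeta2_eq hq]
  refine Tendsto.congr (fun n => ?_) hs1
  exact telD hq n

lemma wronskian_ratio (hq : 1 < q) (n : ℕ) :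
    (G q (2 * n + 1) / oddDF q (n + 1)) * (H q (2 * n) / evenDF q n)
      - (G q (2 * n) / evenDF q n) * (H q (2 * n + 1) / oddDF q (n + 1)) = 1 := by
  have hw := wronskian hq n
  have h1 : oddDF q (n + 1) ≠ 0 := ne_of_gt (oddDF_pos hq _)
  have h2 : evenDF q n ≠ 0 := ne_of_gt (evenDF_pos hq _)
  field_simp
  linear_combination hw

lemma main_gt_one (hq : 1 < q) :
    Aalpha1 q * Abeta1 q - Salpha2 q * Sbeta2 q = 1 := by
  have hlim : Tendsto (fun n => (G q (2 * n + 1) / oddDF q (n + 1)) * (H q (2 * n) / evenDF q n)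
      - (G q (2 * n) / evenDF q n) * (H q (2 * n + 1) / oddDF q (n + 1))) atTop
      (𝓝 (Aalpha1 q * Abeta1 q - Salpha2 q * Sbeta2 q)) :=
    ((tendstoA hq).mul (tendstoC hq)).sub ((tendstoS hq).mul (tendstoD hq))
  have hconst : Tendsto (fun n => (G q (2 * n + 1) / oddDF q (n + 1)) * (H q (2 * n) / evenDF q n)
      - (G q (2 * n) / evenDF q n) * (H q (2 * n + 1) / oddDF q (n + 1))) atTop (𝓝 1) := by
    refine Tendsto.congr (fun n => (wronskian_ratio hq n).symm) tendsto_const_nhds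
  exact tendsto_nhds_unique hlim hconst

end Scratch8

namespace Scratch9
open Scratch8

lemma qnum_inv (q : ℝ) (n : ℕ) : qnum q⁻¹ n = qnum q n := by
  rw [qnum, qnum, inv_inv, inv_zpow, inv_zpow, ← zpow_neg, ← zpow_neg, neg_neg]
  rw [show (q ^ (-(n:ℤ)) - q ^ (n:ℤ)) = -(q ^ (n:ℤ) - q ^ (-(n:ℤ))) from by ring,
    show (q⁻¹ - q) = -(q - q⁻¹) from by ring, neg_div_neg_eq]

lemma oddDF_inv (q : ℝ) (n : ℕ) : oddDF q⁻¹ n = oddDF q n := by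
  induction n with
  | zero => rfl
  | succ m ih => rw [oddDF, oddDF, qnum_inv, ih]

lemma evenDF_inv (q : ℝ) (n : ℕ) : evenDF q⁻¹ n = evenDF q n := by
  induction n with
  | zero => rfl
  | succ m ih => rw [evenDF, evenDF, qnum_inv, ih]

lemma alphaC_inv (q : ℝ) (m : ℕ) : ∀ n, alphaC q⁻¹ m n = alphaC q m n := by
  induction m with
  | zero => intro n; rfl
  | succ m ih =>
      intro n
      rw [alphaC, alphaC]
      exact Finset.sum_congr rfl fun k _ => by rw [qnum_inv, ih]

lemma betaC_inv (q : ℝ) (m : ℕ) : ∀ n, betaC q⁻¹ m n = betaC q m n := by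
  induction m with
  | zero => intro n; rfl
  | succ m ih =>
      intro n
      rw [betaC, betaC]
      exact Finset.sum_congr rfl fun k _ => by rw [qnum_inv, ih]

lemma Aalpha1_inv (q : ℝ) : Aalpha1 q⁻¹ = Aalpha1 q := by
  simp only [Aalpha1, oddDF_inv, alphaC_inv]

lemma Salpha2_inv (q : ℝ) : Salpha2 q⁻¹ = Salpha2 q := by
  simp only [Salpha2, oddDF_inv, evenDF_inv, alphaC_inv]

lemma Abeta1_inv (q : ℝ) : Abeta1 q⁻¹ = Abeta1 q := by
  simp only [Abeta1, evenDF_inv, betaC_inv]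

lemma Sbeta2_inv (q : ℝ) : Sbeta2 q⁻¹ = Sbeta2 q := by
  simp only [Sbeta2, oddDF_inv, evenDF_inv, betaC_inv]

end Scratch9



/-- `A_α^{(1)}·A_β^{(1)} − S_α^{(2)}·S_β^{(2)} = 1`. -/
theorem stmt17 (q : ℝ) (hq : 0 < q) (hq1 : q ≠ 1) :
    Aalpha1 q * Abeta1 q - Salpha2 q * Sbeta2 q = 1 := by
  rcases lt_or_gt_of_ne hq1 with h | h
  · have hinv : 1 < q⁻¹ := (one_lt_inv₀ hq).mpr h
    have := Scratch8.main_gt_one hinv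
    rwa [Scratch9.Aalpha1_inv, Scratch9.Abeta1_inv, Scratch9.Salpha2_inv,
      Scratch9.Sbeta2_inv] at this
  · exact Scratch8.main_gt_one h
end
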